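/- For α ∈ (1,2), λ ≥ 0, h > 0, the banded Toeplitz truncation coefficients satisfy: for every ℓ ≥ 2, ∑_{k=0, k≠1}^{ℓ} g_k^(α) < −g_1^(α), i.e., the sum of the nonnegative (off-index-1) tempered coefficients up to index ℓ is strictly less than the absolute value of g_1^(α). -/

import Mathlib

/-
With `x = exp (-(h * lam)) ∈ (0, 1]`, factoring `exp (h * lam)` out of every coefficient turns
the claim into `∑_{k ≤ ℓ} g̃_k x^k < (1 - x)^α`. For `x < 1` the right side is the sum of the
binomial series `∑ g̃_k x^k`, whose terms with `k ≥ 2` are positive when `1 < α < 2`, so every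
partial sum of order `≥ 1` lies below it; letting `x → 1⁻` keeps the non-strict bound at `x = 1`.
Strictness comes from dropping the positive term `g̃_{ℓ+1} x^{ℓ+1}`.
-/

open Real Finset

noncomputable def gchoose (α : ℝ) (k : ℕ) : ℝ :=
  (∏ i ∈ Finset.range k, (α - i)) / (Nat.factorial k)

noncomputable def gtilde (α : ℝ) (k : ℕ) : ℝ := (-1) ^ k * gchoose α k

noncomputable def gtemp (α lam h : ℝ) (k : ℕ) : ℝ :=
  if k = 1 then gtilde α 1 - Real.exp (h * lam) * (1 - Real.exp (-(h * lam))) ^ α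
  else gtilde α k * Real.exp (-(((k : ℝ) - 1) * (h * lam)))

open Filter Topology

lemma gchoose_eq_choose (α : ℝ) (k : ℕ) : gchoose α k = Ring.choose α k := by
  rw [Ring.choose_eq_smul, smul_eq_mul, gchoose, ← descPochhammer_eval_eq_prod_range,
    ← descPochhammer_map (algebraMap ℤ ℝ), Polynomial.eval_map_algebraMap,
    Polynomial.aeval_eq_smeval, div_eq_inv_mul]

lemma hasSum_gtilde_mul_pow (α : ℝ) {x : ℝ} (hx : |x| < 1) :
    HasSum (fun k => gtilde α k * x ^ k) ((1 - x) ^ α) := by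
  have hmem : -x ∈ Metric.eball (0 : ℝ) 1 := by
    rwa [Metric.mem_eball, edist_zero_right, enorm_neg, ← ofReal_norm, ENNReal.ofReal_lt_one]
  have := Real.one_add_rpow_hasFPowerSeriesOnBall_zero (a := α) |>.hasSum hmem
  simp only [binomialSeries_apply, List.ofFn_const, List.prod_replicate, smul_eq_mul,
    zero_sub, ← sub_eq_add_neg] at this
  refine this.congr_fun fun k => ?_
  rw [gtilde, gchoose_eq_choose, neg_pow]
  ring

lemma gtilde_one (α : ℝ) : gtilde α 1 = -α := by
  simp [gtilde, gchoose]

lemma gtilde_succ (α : ℝ) (k : ℕ) : gtilde α (k + 1) = gtilde α k * ((k - α) / (k + 1)) := by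
  simp only [gtilde, gchoose, prod_range_succ, Nat.factorial_succ, pow_succ]
  push_cast
  field_simp
  ring

lemma gtilde_pos {α : ℝ} (hα1 : 1 < α) (hα2 : α < 2) {k : ℕ} (hk : 2 ≤ k) : 0 < gtilde α k := by
  induction k, hk using Nat.le_induction with
  | base =>
    rw [gtilde_succ, gtilde_one]
    norm_num
    nlinarith
  | succ k hk ih =>
    have : (2 : ℝ) ≤ k := by exact_mod_cast hk
    rw [gtilde_succ]
    exact mul_pos ih (div_pos (by linarith) (by positivity))

lemma sum_range_gtilde_mul_pow_le {α : ℝ} (hα1 : 1 < α) (hα2 : α < 2) {n : ℕ} (hn : 1 ≤ n)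
    {x : ℝ} (hx0 : 0 ≤ x) (hx1 : x ≤ 1) :
    ∑ k ∈ range (n + 1), gtilde α k * x ^ k ≤ (1 - x) ^ α := by
  have h_lt_one : ∀ y, 0 ≤ y → y < 1 → ∑ k ∈ range (n + 1), gtilde α k * y ^ k ≤ (1 - y) ^ α :=
    fun y hy0 hy1 => sum_le_hasSum _
      (fun k hk => mul_nonneg (gtilde_pos hα1 hα2 (by simp at hk; omega)).le (pow_nonneg hy0 k))
      (hasSum_gtilde_mul_pow α (abs_lt.mpr ⟨by linarith, hy1⟩))
  rcases hx1.lt_or_eq with hx1 | rfl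
  · exact h_lt_one x hx0 hx1
  refine le_of_tendsto_of_tendsto (b := 𝓝[<] (1 : ℝ))
    (f := fun y => ∑ k ∈ range (n + 1), gtilde α k * y ^ k) (g := fun y => (1 - y) ^ α) ?_ ?_ ?_
  · exact (Continuous.tendsto (by fun_prop) 1).mono_left nhdsWithin_le_nhds
  · exact ((continuous_const.sub continuous_id).rpow_const fun _ => Or.inr (by linarith)).tendsto 1
      |>.mono_left nhdsWithin_le_nhds
  · filter_upwards [Ioo_mem_nhdsLT zero_lt_one] with y hy using h_lt_one y hy.1.le hy.2

lemma sum_range_gtilde_mul_pow_lt {α : ℝ} (hα1 : 1 < α) (hα2 : α < 2) {n : ℕ} (hn : 1 ≤ n)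
    {x : ℝ} (hx0 : 0 < x) (hx1 : x ≤ 1) :
    ∑ k ∈ range (n + 1), gtilde α k * x ^ k < (1 - x) ^ α :=
  calc ∑ k ∈ range (n + 1), gtilde α k * x ^ k
      < ∑ k ∈ range (n + 2), gtilde α k * x ^ k := by
        rw [sum_range_succ _ (n + 1), lt_add_iff_pos_right]
        exact mul_pos (gtilde_pos hα1 hα2 (by omega)) (pow_pos hx0 _)
    _ ≤ (1 - x) ^ α := sum_range_gtilde_mul_pow_le hα1 hα2 (by omega) hx0.le hx1

lemma gtemp_of_ne_one (α lam h : ℝ) {k : ℕ} (hk : k ≠ 1) :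
    gtemp α lam h k = gtilde α k * exp (-(h * lam)) ^ k * exp (h * lam) := by
  rw [gtemp, if_neg hk, mul_assoc, ← exp_nat_mul, ← exp_add]
  ring_nf

lemma neg_gtemp_one (α lam h : ℝ) :
    -gtemp α lam h 1 =
      ((1 - exp (-(h * lam))) ^ α - gtilde α 1 * exp (-(h * lam))) * exp (h * lam) := by
  rw [gtemp, if_pos rfl, sub_mul, mul_assoc, ← exp_add, neg_add_cancel, exp_zero, mul_one]
  ring

theorem stmt_14 (α lam h : ℝ) (hα : 1 < α ∧ α < 2) (hlam : 0 ≤ lam) (hh : 0 < h)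
    (l : ℕ) (hl : 2 ≤ l) :
    ∑ k ∈ (Finset.range (l + 1)).erase 1, gtemp α lam h k < -gtemp α lam h 1 := by
  have hx1 : exp (-(h * lam)) ≤ 1 := exp_le_one_iff.mpr (neg_nonpos.mpr (mul_nonneg hh.le hlam))
  have key := sum_range_gtilde_mul_pow_lt hα.1 hα.2 (by omega : 1 ≤ l) (exp_pos _) hx1
  rw [← add_sum_erase _ _ (mem_range.mpr (by omega : 1 < l + 1)), pow_one] at key
  rw [sum_congr rfl fun k hk => gtemp_of_ne_one α lam h (ne_of_mem_erase hk), ← sum_mul,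
    neg_gtemp_one]
  refine mul_lt_mul_of_pos_right ?_ (exp_pos _)
  linarith
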